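/- arXiv:2512.21660 — 3 statements merged into one kernel-verified Lean document; each statement's English description precedes it below -/
import Mathlib

section
/- The function J(s) = 2·∑_{1≤i<j≤M} log(s_j − s_i) + ∑_{m=1}^M log(1 − s_m^2), defined on the open convex set {s ∈ ℝ^M : −1 < s_1 < s_2 < ... < s_M < 1}, is strictly concave. -/
open Finset

noncomputable def J (M : ℕ) (s : Fin M → ℝ) : ℝ :=
  2 * ∑ i : Fin M, ∑ j ∈ Finset.Ioi i, Real.log (s j - s i) +
    ∑ m : Fin M, Real.log (1 - (s m) ^ 2)

private lemma log_ccv {a b u v : ℝ} (ha : 0 ≤ a) (hb : 0 ≤ b) (hab : a + b = 1)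
    (hu : 0 < u) (hv : 0 < v) :
    a * Real.log u + b * Real.log v ≤ Real.log (a * u + b * v) := by
  have := strictConcaveOn_log_Ioi.concaveOn.2 (Set.mem_Ioi.2 hu) (Set.mem_Ioi.2 hv) ha hb hab
  simpa using this

private lemma log_sccv {a b u v : ℝ} (ha : 0 < a) (hb : 0 < b) (hab : a + b = 1)
    (hu : 0 < u) (hv : 0 < v) (huv : u ≠ v) :
    a * Real.log u + b * Real.log v < Real.log (a * u + b * v) := by
  have := strictConcaveOn_log_Ioi.2 (Set.mem_Ioi.2 hu) (Set.mem_Ioi.2 hv) huv ha hb hab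
  simpa using this

private lemma coord_key {a b u v : ℝ} (ha : 0 < a) (hb : 0 < b) (hab : a + b = 1)
    (hu1 : -1 < u) (hu2 : u < 1) (hv1 : -1 < v) (hv2 : v < 1) :
    (a * Real.log (1 - u ^ 2) + b * Real.log (1 - v ^ 2) ≤
        Real.log (1 - (a * u + b * v) ^ 2)) ∧
    (u ≠ v → a * Real.log (1 - u ^ 2) + b * Real.log (1 - v ^ 2) <
        Real.log (1 - (a * u + b * v) ^ 2)) := by
  have p1 : 0 < 1 - u := by linarith
  have p2 : 0 < 1 + u := by linarith
  have p3 : 0 < 1 - v := by linarith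
  have p4 : 0 < 1 + v := by linarith
  have pz1 : 0 < 1 - (a * u + b * v) := by nlinarith
  have pz2 : 0 < 1 + (a * u + b * v) := by nlinarith
  have e1 : (1 : ℝ) - u ^ 2 = (1 - u) * (1 + u) := by ring
  have e2 : (1 : ℝ) - v ^ 2 = (1 - v) * (1 + v) := by ring
  have ez : (1 : ℝ) - (a * u + b * v) ^ 2 = (1 - (a * u + b * v)) * (1 + (a * u + b * v)) := by
    ring
  have em : a * (1 - u) + b * (1 - v) = 1 - (a * u + b * v) := by linear_combination hab
  have ep : a * (1 + u) + b * (1 + v) = 1 + (a * u + b * v) := by linear_combination hab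
  have h1 : a * Real.log (1 - u) + b * Real.log (1 - v) ≤ Real.log (1 - (a * u + b * v)) := by
    rw [← em]; exact log_ccv ha.le hb.le hab p1 p3
  have h2 : a * Real.log (1 + u) + b * Real.log (1 + v) ≤ Real.log (1 + (a * u + b * v)) := by
    rw [← ep]; exact log_ccv ha.le hb.le hab p2 p4
  rw [e1, e2, ez, Real.log_mul p1.ne' p2.ne', Real.log_mul p3.ne' p4.ne',
    Real.log_mul pz1.ne' pz2.ne']
  constructor
  · nlinarith [h1, h2]
  · intro huv
    have h1' : a * Real.log (1 - u) + b * Real.log (1 - v) < Real.log (1 - (a * u + b * v)) := by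
      rw [← em]
      exact log_sccv ha hb hab p1 p3 (by intro h; apply huv; linarith)
    nlinarith [h1', h2]

theorem J_strictConcaveOn (M : ℕ) (hM : 2 ≤ M) :
    StrictConcaveOn ℝ
      {s : Fin M → ℝ | (∀ i, s i ∈ Set.Ioo (-1 : ℝ) 1) ∧ StrictMono s} (J M) := by
  constructor
  · -- convexity of the domain
    intro x hx y hy a b ha hb hab
    refine ⟨fun i => ?_, fun i j hij => ?_⟩
    · obtain ⟨h1, h2⟩ := hx.1 i
      obtain ⟨h3, h4⟩ := hy.1 i
      simp only [Pi.add_apply, Pi.smul_apply, smul_eq_mul]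
      rcases ha.lt_or_eq with h | h
      · constructor <;>
          nlinarith [mul_lt_mul_of_pos_left h1 h, mul_lt_mul_of_pos_left h2 h,
            mul_le_mul_of_nonneg_left h3.le hb, mul_le_mul_of_nonneg_left h4.le hb]
      · have hb1 : b = 1 := by linarith
        rw [← h, hb1]
        constructor <;> simp <;> linarith
    · have h1 := hx.2 hij
      have h2 := hy.2 hij
      simp only [Pi.add_apply, Pi.smul_apply, smul_eq_mul]
      rcases ha.lt_or_eq with h | h
      · nlinarith [mul_lt_mul_of_pos_left h1 h, mul_le_mul_of_nonneg_left h2.le hb]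
      · have hb1 : b = 1 := by linarith
        rw [← h, hb1]; simpa using h2
  · intro x hx y hy hxy a b ha hb hab
    set z : Fin M → ℝ := a • x + b • y with hz
    have hzval : ∀ i, z i = a * x i + b * y i := by
      intro i; simp [hz]
    -- pairwise sums
    have hS : a * (∑ i : Fin M, ∑ j ∈ Finset.Ioi i, Real.log (x j - x i)) +
        b * (∑ i : Fin M, ∑ j ∈ Finset.Ioi i, Real.log (y j - y i)) ≤
        ∑ i : Fin M, ∑ j ∈ Finset.Ioi i, Real.log (z j - z i) := by
      rw [Finset.mul_sum, Finset.mul_sum, ← Finset.sum_add_distrib]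
      refine Finset.sum_le_sum fun i _ => ?_
      rw [Finset.mul_sum, Finset.mul_sum, ← Finset.sum_add_distrib]
      refine Finset.sum_le_sum fun j hj => ?_
      have hij : i < j := Finset.mem_Ioi.mp hj
      have hd : z j - z i = a * (x j - x i) + b * (y j - y i) := by
        rw [hzval, hzval]; ring
      rw [hd]
      exact log_ccv ha.le hb.le hab (sub_pos.2 (hx.2 hij)) (sub_pos.2 (hy.2 hij))
    -- barrier sums
    obtain ⟨m0, hm0⟩ := Function.ne_iff.mp hxy
    have hT : a * (∑ m : Fin M, Real.log (1 - x m ^ 2)) +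
        b * (∑ m : Fin M, Real.log (1 - y m ^ 2)) <
        ∑ m : Fin M, Real.log (1 - z m ^ 2) := by
      rw [Finset.mul_sum, Finset.mul_sum, ← Finset.sum_add_distrib]
      refine Finset.sum_lt_sum (fun m _ => ?_) ⟨m0, Finset.mem_univ m0, ?_⟩
      · obtain ⟨h1, h2⟩ := hx.1 m
        obtain ⟨h3, h4⟩ := hy.1 m
        have := (coord_key ha hb hab h1 h2 h3 h4).1
        rw [hzval]; exact this
      · obtain ⟨h1, h2⟩ := hx.1 m0
        obtain ⟨h3, h4⟩ := hy.1 m0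
        have := (coord_key ha hb hab h1 h2 h3 h4).2 hm0
        rw [hzval]; exact this
    simp only [J, smul_eq_mul]
    nlinarith [hS, hT]
end

section
/- Suppose p is a monic polynomial of degree n ≥ 1 with distinct real roots t_1, ..., t_n, and let r(t) = t(t−1)(t−b)·p''(t) + (2(t−1)(t−b) + 2t(t−b) + t(t−1))·p'(t), where b is a real number distinct from every t_m. If every root t_m of p satisfies the equilibrium equation ∑_{i≠m} 2/(t_m − t_i) = −2/t_m − 2/(t_m − 1) − 1/(t_m − b) (with all t_m distinct from 0, 1, b), then p divides r in ℝ[t]. -/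
open Polynomial Finset

/-!
Since the `t m` are distinct, `p` divides `r` as soon as `r (t m) = 0` for every `m`. Writing
`p = (X - t m) q`, one gets `p'(t m) = q(t m)` and `p''(t m) = 2 q'(t m)
= p'(t m) ∑_{i ≠ m} 2 / (t m - t i)`, so `r (t m)` is `p'(t m) t m (t m - 1) (t m - b)` times
`∑_{i ≠ m} 2 / (t m - t i) + 2 / t m + 2 / (t m - 1) + 1 / (t m - b)`, which the equilibrium
equation makes zero.
-/

theorem Polynomial.eval_derivative_derivative_X_sub_C_mul {R : Type*} [CommRing R] (a : R)
    (q : R[X]) :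
    eval a (derivative (derivative ((X - C a) * q))) = 2 * eval a (derivative q) := by
  rw [derivative_mul, derivative_X_sub_C, one_mul, derivative_add, derivative_mul,
    derivative_X_sub_C]
  simp only [eval_add, eval_mul, eval_sub, eval_X, eval_C, sub_self, zero_mul, one_mul]
  ring

namespace Lagrange

variable {F ι : Type*} [Field F] {s : Finset ι} {v : ι → F}

theorem eval_derivative_nodal_eq_mul_sum {x : F} (hx : ∀ i ∈ s, x ≠ v i) :
    eval x (derivative (nodal s v)) = eval x (nodal s v) * ∑ i ∈ s, 1 / (x - v i) := by
  classical
  rw [derivative_nodal, eval_finsetSum, mul_sum]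
  refine sum_congr rfl fun i hi => ?_
  rw [nodal_eq_mul_nodal_erase hi, eval_mul, eval_sub, eval_X, eval_C,
    mul_comm (x - v i), mul_assoc, mul_one_div_cancel (sub_ne_zero.2 (hx i hi)), mul_one]

theorem eval_derivative_derivative_nodal_at_node [DecidableEq ι] (hvs : Set.InjOn v s) {i : ι}
    (hi : i ∈ s) :
    eval (v i) (derivative (derivative (nodal s v))) =
      eval (v i) (derivative (nodal s v)) * ∑ j ∈ s.erase i, 2 / (v i - v j) := by
  have hnode : ∀ j ∈ s.erase i, v i ≠ v j := fun j hj h =>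
    (mem_erase.1 hj).1 (hvs (mem_erase.1 hj).2 hi h.symm)
  rw [eval_nodal_derivative_eval_node_eq hi, nodal_eq_mul_nodal_erase hi,
    eval_derivative_derivative_X_sub_C_mul, eval_derivative_nodal_eq_mul_sum hnode, mul_sum,
    mul_sum, mul_sum]
  refine sum_congr rfl fun j _ => ?_
  ring

end Lagrange

open Lagrange in
theorem equilibrium_implies_dvd_general (n : ℕ) (t : Fin n → ℝ)
    (ht : Function.Injective t) (b : ℝ) (hb : ∀ m, t m ≠ b)
    (h0 : ∀ m, t m ≠ 0) (h1 : ∀ m, t m ≠ 1)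
    (p : Polynomial ℝ) (hp : p = ∏ i : Fin n, (X - C (t i)))
    (r : Polynomial ℝ)
    (hr : r = X * (X - 1) * (X - C b) * Polynomial.derivative (Polynomial.derivative p) +
        (2 * (X - 1) * (X - C b) + 2 * X * (X - C b) + X * (X - 1)) *
          Polynomial.derivative p)
    (heq : ∀ m : Fin n,
      ∑ i ∈ Finset.univ.erase m, 2 / (t m - t i) =
        -2 / t m - 2 / (t m - 1) - 1 / (t m - b)) :
    p ∣ r := by
  classical
  rw [← nodal_eq] at hp
  subst hp
  refine Fintype.prod_dvd_of_coprime (pairwise_coprime_X_sub_C ht) fun m => ?_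
  rw [dvd_iff_isRoot, IsRoot, hr]
  simp only [eval_add, eval_mul, eval_sub, eval_X, eval_C, eval_one, eval_ofNat]
  rw [eval_derivative_derivative_nodal_at_node ht.injOn (mem_univ m), heq m]
  have hm0 : t m ≠ 0 := h0 m
  have hm1 : t m - 1 ≠ 0 := sub_ne_zero.2 (h1 m)
  have hmb : t m - b ≠ 0 := sub_ne_zero.2 (hb m)
  field_simp
  ring

theorem equilibrium_implies_dvd (n : ℕ) (hn : 1 ≤ n) (t : Fin n → ℝ)
    (ht : Function.Injective t) (b : ℝ) (hb : ∀ m, t m ≠ b)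
    (h0 : ∀ m, t m ≠ 0) (h1 : ∀ m, t m ≠ 1)
    (p : Polynomial ℝ) (hp : p = ∏ i : Fin n, (X - C (t i)))
    (r : Polynomial ℝ)
    (hr : r = X * (X - 1) * (X - C b) * Polynomial.derivative (Polynomial.derivative p) +
        (2 * (X - 1) * (X - C b) + 2 * X * (X - C b) + X * (X - 1)) *
          Polynomial.derivative p)
    (heq : ∀ m : Fin n,
      ∑ i ∈ Finset.univ.erase m, 2 / (t m - t i) =
        -2 / t m - 2 / (t m - 1) - 1 / (t m - b)) :
    p ∣ r :=
  equilibrium_implies_dvd_general n t ht b hb h0 h1 p hp r hr heq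
end

section
/- Let R be a real (N+1)×(N+1) tridiagonal matrix with subdiagonal entries A_1,...,A_N and superdiagonal entries C_0,...,C_{N−1} such that A_n·C_{n−1} > 0 for all 1 ≤ n ≤ N. Then R has N+1 distinct real eigenvalues. -/
/-!
Conjugating `R` by the diagonal matrix with entries `√wᵢ`, where `w` is a positive solution of
the detailed-balance equations `wᵢ Rᵢⱼ = wⱼ Rⱼᵢ`, makes it symmetric, so its eigenvalues are
real. An eigenvector of a matrix with no zeros on the superdiagonal and zeros above it is
determined by its first coordinate: read from the top, the `k`-th row of the eigenvalue equation
solves for coordinate `k + 1`. Hence every eigenspace is a line, and the eigenvalues attached to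
an orthonormal eigenbasis are pairwise distinct.
-/

open Matrix

namespace Matrix

theorem eq_zero_of_mulVec_eq_smul_of_apply_zero_eq_zero {K : Type*} [Ring K] [NoZeroDivisors K]
    {N : ℕ} {A : Matrix (Fin (N + 1)) (Fin (N + 1)) K}
    (hupper : ∀ i j : Fin (N + 1), (i : ℕ) + 1 < j → A i j = 0)
    (hsup : ∀ k : Fin N, A k.castSucc k.succ ≠ 0)
    {μ : K} {v : Fin (N + 1) → K} (hv : A *ᵥ v = μ • v) (h0 : v 0 = 0) : v = 0 := by
  suffices h : ∀ i : Fin (N + 1), ∀ j ≤ i, v j = 0 from funext fun j => h (Fin.last N) j j.le_last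
  intro i
  induction i using Fin.induction with
  | zero => intro j hj; rwa [Fin.le_zero_iff.mp hj]
  | succ k ih =>
    have hrow : A k.castSucc k.succ * v k.succ = 0 := by
      have h := congrFun hv k.castSucc
      rw [Pi.smul_apply, ih _ le_rfl, smul_zero, mulVec, dotProduct,
        Finset.sum_eq_single k.succ] at h
      · exact h
      · intro j _ hj
        rcases le_or_gt j k.castSucc with hjk | hjk
        · rw [ih j hjk, mul_zero]
        · have hj' := Fin.val_ne_iff.mpr hj
          rw [hupper _ _ (by simp [Fin.lt_def] at hjk hj' ⊢; omega), zero_mul]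
      · simp
    intro j hj
    rcases hj.lt_or_eq with hj | rfl
    · exact ih j (Fin.le_castSucc_iff.mpr hj)
    · exact (mul_eq_zero.mp hrow).resolve_left (hsup k)

theorem IsHermitian.eigenvalues_injective_of_eq_zero_of_apply_eq_zero {𝕜 : Type*} [RCLike 𝕜]
    {n : Type*} [Fintype n] [DecidableEq n] {A : Matrix n n 𝕜} (hA : A.IsHermitian) (i₀ : n)
    (h : ∀ (μ : 𝕜) (v : n → 𝕜), A *ᵥ v = μ • v → v i₀ = 0 → v = 0) :
    Function.Injective hA.eigenvalues := by
  intro i j hij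
  by_contra hne
  set b := hA.eigenvectorBasis
  have hb : ∀ k, A *ᵥ ⇑(b k) = (hA.eigenvalues k : 𝕜) • ⇑(b k) := fun k => by
    rw [hA.mulVec_eigenvectorBasis, RCLike.real_smul_eq_coe_smul (K := 𝕜)]
  have hpair : LinearIndependent 𝕜 ![b i, b j] := by
    have := b.orthonormal.linearIndependent.comp ![i, j] (by simpa [Fin.forall_fin_two] using hne)
    rwa [show ⇑b ∘ ![i, j] = ![b i, b j] by ext k : 1; fin_cases k <;> rfl] at this
  -- `b j i₀ • b i - b i i₀ • b j` is an eigenvector vanishing at `i₀`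
  have hcomb : b j i₀ • b i + (-b i i₀) • b j = 0 := by
    refine (WithLp.ofLp_injective 2).eq_iff.mp ?_
    refine h (hA.eigenvalues i) _ ?_ ?_
    · simp [mulVec_add, mulVec_neg, mulVec_smul, hb, hij, smul_comm (b j i₀), smul_comm (b i i₀)]
    · simp [mul_comm]
  have hj0 : ⇑(b j) = 0 := h _ _ (hb j) (hpair.eq_zero_of_pair hcomb).1
  exact b.orthonormal.ne_zero j (by simpa using congrArg (WithLp.toLp 2) hj0)

theorem spectrum_diagonal_mul_mul_diagonal_inv {K n : Type*} [Field K] [Fintype n] [DecidableEq n]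
    {d : n → K} (hd : ∀ i, d i ≠ 0) (A : Matrix n n K) :
    spectrum K (diagonal d * A * diagonal d⁻¹) = spectrum K A := by
  let u : (Matrix n n K)ˣ :=
    ⟨diagonal d, diagonal d⁻¹, by simp [diagonal_mul_diagonal, hd],
      by simp [diagonal_mul_diagonal, hd]⟩
  exact spectrum.units_conjugate (u := u)

theorem isSymm_diagonal_mul_mul_diagonal_inv {K n : Type*} [Field K] [Fintype n] [DecidableEq n]
    {A : Matrix n n K} {d : n → K} (hd : ∀ i, d i ≠ 0)
    (hA : ∀ i j, d i ^ 2 * A i j = d j ^ 2 * A j i) :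
    (diagonal d * A * diagonal d⁻¹).IsSymm := by
  refine IsSymm.ext fun i j => ?_
  simp only [mul_diagonal, diagonal_mul, Pi.inv_apply]
  rw [← div_eq_mul_inv, ← div_eq_mul_inv, div_eq_div_iff (hd i) (hd j)]
  linear_combination hA j i

/-- `w (k + 1) / w k = R k (k + 1) / R (k + 1) k`, the recursion forced by detailed balance. -/
noncomputable def tridiagonalWeight {K : Type*} [Field K] {N : ℕ}
    (R : Matrix (Fin (N + 1)) (Fin (N + 1)) K) : Fin (N + 1) → K :=
  Fin.partialProd fun k : Fin N => R k.castSucc k.succ / R k.succ k.castSucc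

theorem tridiagonalWeight_pos {K : Type*} [Field K] [LinearOrder K] [IsStrictOrderedRing K]
    {N : ℕ} {R : Matrix (Fin (N + 1)) (Fin (N + 1)) K}
    (hadj : ∀ k : Fin N, 0 < R k.castSucc k.succ * R k.succ k.castSucc) (i : Fin (N + 1)) :
    0 < tridiagonalWeight R i := by
  induction i using Fin.induction with
  | zero => simp [tridiagonalWeight]
  | succ k ih =>
    rw [tridiagonalWeight, Fin.partialProd_succ]
    exact mul_pos ih (div_pos_iff.mpr (mul_pos_iff.mp (hadj k)))

theorem tridiagonalWeight_mul_apply_comm {K : Type*} [Field K] {N : ℕ}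
    {R : Matrix (Fin (N + 1)) (Fin (N + 1)) K}
    (htri : ∀ i j : Fin (N + 1), (i : ℕ) ≠ (j : ℕ) → (i : ℕ) ≠ (j : ℕ) + 1 →
      (j : ℕ) ≠ (i : ℕ) + 1 → R i j = 0)
    (hsub : ∀ k : Fin N, R k.succ k.castSucc ≠ 0) (i j : Fin (N + 1)) :
    tridiagonalWeight R i * R i j = tridiagonalWeight R j * R j i := by
  wlog hij : (i : ℕ) ≤ j generalizing i j
  · exact (this j i (by omega)).symm
  rcases (show (j : ℕ) = i ∨ (j : ℕ) = i + 1 ∨ (i : ℕ) + 1 < j by omega) with h | h | h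
  · rw [Fin.ext h]
  · obtain ⟨k, rfl, rfl⟩ : ∃ k : Fin N, k.castSucc = i ∧ k.succ = j :=
      ⟨⟨i, by omega⟩, rfl, Fin.ext h.symm⟩
    rw [tridiagonalWeight, Fin.partialProd_succ, mul_assoc, div_mul_cancel₀ _ (hsub k)]
  · rw [htri i j (by omega) (by omega) (by omega), htri j i (by omega) (by omega) (by omega),
      mul_zero, mul_zero]

theorem exists_isHermitian_diagonal_mul_mul_diagonal_inv_of_tridiagonal {N : ℕ}
    {R : Matrix (Fin (N + 1)) (Fin (N + 1)) ℝ}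
    (htri : ∀ i j : Fin (N + 1), (i : ℕ) ≠ (j : ℕ) → (i : ℕ) ≠ (j : ℕ) + 1 →
      (j : ℕ) ≠ (i : ℕ) + 1 → R i j = 0)
    (hadj : ∀ k : Fin N, 0 < R k.castSucc k.succ * R k.succ k.castSucc) :
    ∃ d : Fin (N + 1) → ℝ, (∀ i, d i ≠ 0) ∧ (diagonal d * R * diagonal d⁻¹).IsHermitian := by
  have hw := tridiagonalWeight_pos hadj
  refine ⟨fun i => √(tridiagonalWeight R i), fun i => (Real.sqrt_pos.mpr (hw i)).ne', ?_⟩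
  refine isHermitian_iff_isSymm.mpr (isSymm_diagonal_mul_mul_diagonal_inv
    (fun i => (Real.sqrt_pos.mpr (hw i)).ne') fun i j => ?_)
  rw [Real.sq_sqrt (hw i).le, Real.sq_sqrt (hw j).le]
  exact tridiagonalWeight_mul_apply_comm htri (fun k => right_ne_zero_of_mul (hadj k).ne') i j

end Matrix

theorem tridiagonal_distinct_real_eigenvalues (N : ℕ)
    (R : Matrix (Fin (N + 1)) (Fin (N + 1)) ℝ)
    (htri : ∀ i j : Fin (N + 1), (i : ℕ) ≠ (j : ℕ) → (i : ℕ) ≠ (j : ℕ) + 1 →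
      (j : ℕ) ≠ (i : ℕ) + 1 → R i j = 0)
    (hpos : ∀ i j : Fin (N + 1), (i : ℕ) = (j : ℕ) + 1 → 0 < R i j * R j i) :
    ∃ μ : Fin (N + 1) → ℝ, Function.Injective μ ∧
      ∀ k, Module.End.HasEigenvalue (Matrix.toLin' R) (μ k) := by
  have hadj : ∀ k : Fin N, 0 < R k.castSucc k.succ * R k.succ k.castSucc := fun k => by
    rw [mul_comm]
    exact hpos _ _ (by simp)
  obtain ⟨d, hd, hS⟩ := exists_isHermitian_diagonal_mul_mul_diagonal_inv_of_tridiagonal htri hadj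
  have hinj : Function.Injective hS.eigenvalues :=
    hS.eigenvalues_injective_of_eq_zero_of_apply_eq_zero 0 fun _ _ hv h0 =>
      eq_zero_of_mulVec_eq_smul_of_apply_zero_eq_zero
        (fun i j hij => by
          simp [diagonal_mul, mul_diagonal, htri i j (by omega) (by omega) (by omega)])
        (fun k => by simp [diagonal_mul, mul_diagonal, hd, left_ne_zero_of_mul (hadj k).ne'])
        hv h0
  refine ⟨hS.eigenvalues, hinj, fun k => ?_⟩
  rw [Module.End.hasEigenvalue_iff_mem_spectrum, spectrum_toLin',
    ← spectrum_diagonal_mul_mul_diagonal_inv hd]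
  exact hS.eigenvalues_mem_spectrum_real k
end
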